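/- arXiv:2308.08393 — 2 statements merged into one kernel-verified Lean document; each statement's English description precedes it below -/
import Mathlib

section
/- (Lemma 2b, transfer of global optimisers under rigid transformations.) With the notation of the sparse matching objective E, suppose (P, X̂, Ŷ) is a global minimiser of (P', X̂', Ŷ') ↦ E(X, Y, Δ_X, Δ_Y, h_X, h_Y, d_X, d_Y; P', X̂', Ŷ') over all permutation matrices P' ∈ {0,1}^{n×n} with P'𝟏ₙ = 𝟏ₙ, P'ᵀ𝟏ₙ = 𝟏ₙ and all X̂' ∈ ℝ^{M×3}, Ŷ' ∈ ℝ^{N×3}. Let R ∈ ℝ^{3×3} with RᵀR = I, det R = 1, and t ∈ ℝ³, and let X'' := XRᵀ + 𝟏tᵀ with PLBO Δ_X'' := Π(X̃'')ᵀL_XΠ(X̃''). Then (P, X̂, ŶRᵀ + 𝟏tᵀ) is a global minimiser of (P', X̂', Ŷ') ↦ E(X'', Y, Δ_X'', Δ_Y, h_X, h_Y, d_X, d_Y; P', X̂', Ŷ') over the same feasible set. -/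
open Matrix

/-- The projection matrix `Π(A) := I − A (AᵀA)⁻¹ Aᵀ`. -/
noncomputable def gramProj {m n : Type*} [Fintype m] [Fintype n] [DecidableEq m]
    [DecidableEq n] (A : Matrix m n ℝ) : Matrix m m ℝ :=
  1 - A * (Aᵀ * A)⁻¹ * Aᵀ

/-- Homogeneous coordinates: append an all-ones column to the coordinate matrix. -/
noncomputable def homog {m : ℕ} (X : Matrix (Fin m) (Fin 3) ℝ) :
    Matrix (Fin m) (Fin 3 ⊕ Fin 1) ℝ :=
  Matrix.fromCols X (Matrix.of fun _ _ => (1 : ℝ))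

/-- The projected Laplace–Beltrami operator built from a stiffness matrix `L`:
`Δ_proj := Π(Z̃)ᵀ L Π(Z̃)`. -/
noncomputable def plbo {m : ℕ} (Z : Matrix (Fin m) (Fin 3) ℝ)
    (L : Matrix (Fin m) (Fin m) ℝ) : Matrix (Fin m) (Fin m) ℝ :=
  (gramProj (homog Z))ᵀ * L * gramProj (homog Z)

/-- The Frobenius norm of a real matrix. -/
noncomputable def frobNorm {m n : ℕ} (A : Matrix (Fin m) (Fin n) ℝ) : ℝ :=
  Real.sqrt (∑ i, ∑ j, (A i j) ^ 2)

/-- The Euclidean norm of a real vector. -/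
noncomputable def vnorm {n : ℕ} (v : Fin n → ℝ) : ℝ :=
  Real.sqrt (∑ i, (v i) ^ 2)

/-- The sparse matching objective `E` of the paper. -/
noncomputable def objE {n M N : ℕ} (lamDef lamOri : ℝ)
    (ι : Fin n → Fin M) (κ : Fin n → Fin N)
    (X : Matrix (Fin M) (Fin 3) ℝ) (Y : Matrix (Fin N) (Fin 3) ℝ)
    (ΔX : Matrix (Fin M) (Fin M) ℝ) (ΔY : Matrix (Fin N) (Fin N) ℝ)
    (hX hY : Fin n → ℝ) (dX dY : ℝ)
    (P : Matrix (Fin n) (Fin n) ℝ)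
    (Xh : Matrix (Fin M) (Fin 3) ℝ) (Yh : Matrix (Fin N) (Fin 3) ℝ) : ℝ :=
  (1 / (n * dY)) * frobNorm (Xh.submatrix ι id - P * Y.submatrix κ id)
    + (1 / (n * dX)) * frobNorm (Yh.submatrix κ id - Pᵀ * X.submatrix ι id)
    + lamDef * ((1 / (M * dY)) * frobNorm (ΔX * Xh)
        + (1 / (N * dX)) * frobNorm (ΔY * Yh))
    + (lamOri / n) * vnorm (hX - P *ᵥ hY)

/-- `P` is a permutation matrix: entries in `{0,1}` and all row and column sums equal `1`. -/
def IsPermMat {n : ℕ} (P : Matrix (Fin n) (Fin n) ℝ) : Prop :=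
  (∀ i j, P i j = 0 ∨ P i j = 1) ∧
    P *ᵥ (1 : Fin n → ℝ) = 1 ∧ Pᵀ *ᵥ (1 : Fin n → ℝ) = 1

/-! The rigid motion acts on homogeneous coordinates by right multiplication with an invertible
matrix, so `Π(X̃)` and hence `Δ_X` do not change. Since `Δ_Y` annihilates constants, `Pᵀ𝟏 = 𝟏` and
`Rᵀ` preserves Frobenius norms, the bijection `Ŷ ↦ ŶRᵀ + 𝟏tᵀ` carries the original objective
at `(P, X̂, Ŷ)` to the transformed one at `(P, X̂, ŶRᵀ + 𝟏tᵀ)`, so minimisers correspond. -/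

lemma sum_sq_eq_trace_mul_transpose {m k : ℕ} (A : Matrix (Fin m) (Fin k) ℝ) :
    ∑ i, ∑ j, A i j ^ 2 = (A * Aᵀ).trace := by
  simp [Matrix.trace, Matrix.mul_apply, sq]

lemma frobNorm_mul_transpose_of_transpose_mul_self {m k l : ℕ}
    (A : Matrix (Fin m) (Fin k) ℝ) {R : Matrix (Fin l) (Fin k) ℝ} (hR : Rᵀ * R = 1) :
    frobNorm (A * Rᵀ) = frobNorm A := by
  rw [frobNorm, frobNorm, sum_sq_eq_trace_mul_transpose, sum_sq_eq_trace_mul_transpose,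
    transpose_mul, transpose_transpose, Matrix.mul_assoc, ← Matrix.mul_assoc Rᵀ, hR,
    Matrix.one_mul]

section gramProj

variable {m n : Type*} [Fintype m] [Fintype n] [DecidableEq m] [DecidableEq n]

lemma gramProj_mul_of_isUnit_det (A : Matrix m n ℝ) {S : Matrix n n ℝ} (hS : IsUnit S.det) :
    gramProj (A * S) = gramProj A := by
  have hSt : IsUnit Sᵀ.det := by rwa [det_transpose]
  have hGram : (A * S)ᵀ * (A * S) = Sᵀ * (Aᵀ * A) * S := by
    simp only [transpose_mul, Matrix.mul_assoc]
  rw [gramProj, gramProj, hGram, Matrix.mul_inv_rev, Matrix.mul_inv_rev, transpose_mul]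
  congr 1
  simp only [Matrix.mul_assoc]
  rw [nonsing_inv_mul_cancel_left _ _ hSt, mul_nonsing_inv_cancel_left _ _ hS]

lemma gramProj_mul_self {A : Matrix m n ℝ} (hA : IsUnit (Aᵀ * A)) : gramProj A * A = 0 := by
  rw [gramProj, Matrix.sub_mul, Matrix.one_mul, Matrix.mul_assoc, Matrix.mul_assoc,
    nonsing_inv_mul _ ((isUnit_iff_isUnit_det _).mp hA), Matrix.mul_one, sub_self]

end gramProj

/-- The action `z ↦ R z + t` on homogeneous coordinates, as right multiplication. -/
noncomputable def rigidBlock (R : Matrix (Fin 3) (Fin 3) ℝ) (t : Fin 3 → ℝ) :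
    Matrix (Fin 3 ⊕ Fin 1) (Fin 3 ⊕ Fin 1) ℝ :=
  fromBlocks Rᵀ 0 (of fun _ j => t j) 1

lemma isUnit_det_rigidBlock {R : Matrix (Fin 3) (Fin 3) ℝ} (hR : Rᵀ * R = 1) (t : Fin 3 → ℝ) :
    IsUnit (rigidBlock R t).det := by
  rw [rigidBlock, det_fromBlocks_zero₁₂, det_one, mul_one]
  exact isUnit_det_of_right_inverse hR

lemma homog_rigid {m : ℕ} (X : Matrix (Fin m) (Fin 3) ℝ) (R : Matrix (Fin 3) (Fin 3) ℝ)
    (t : Fin 3 → ℝ) :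
    homog (X * Rᵀ + vecMulVec (1 : Fin m → ℝ) t) = homog X * rigidBlock R t := by
  rw [homog, homog, rigidBlock, fromCols_mul_fromBlocks, Matrix.mul_zero, zero_add,
    Matrix.mul_one]
  congr
  ext i j
  simp [Matrix.mul_apply, vecMulVec]

lemma plbo_rigid {m : ℕ} (X : Matrix (Fin m) (Fin 3) ℝ) (L : Matrix (Fin m) (Fin m) ℝ)
    {R : Matrix (Fin 3) (Fin 3) ℝ} (hR : Rᵀ * R = 1) (t : Fin 3 → ℝ) :
    plbo (X * Rᵀ + vecMulVec (1 : Fin m → ℝ) t) L = plbo X L := by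
  rw [plbo, plbo, homog_rigid, gramProj_mul_of_isUnit_det _ (isUnit_det_rigidBlock hR t)]

-- The constant vector is the last column of the homogeneous coordinates, which `Π` annihilates.
lemma plbo_mulVec_one {m : ℕ} {Y : Matrix (Fin m) (Fin 3) ℝ}
    (hgY : IsUnit ((homog Y)ᵀ * homog Y)) (L : Matrix (Fin m) (Fin m) ℝ) :
    plbo Y L *ᵥ 1 = 0 := by
  have hone : homog Y *ᵥ Pi.single (Sum.inr 0) 1 = 1 := by
    ext i
    simp [homog]
  rw [plbo, ← hone, mulVec_mulVec, Matrix.mul_assoc, gramProj_mul_self hgY, Matrix.mul_zero,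
    zero_mulVec]

lemma plbo_mul_rigid {m : ℕ} {Y : Matrix (Fin m) (Fin 3) ℝ}
    (hgY : IsUnit ((homog Y)ᵀ * homog Y)) (L : Matrix (Fin m) (Fin m) ℝ)
    (Z : Matrix (Fin m) (Fin 3) ℝ) (R : Matrix (Fin 3) (Fin 3) ℝ) (t : Fin 3 → ℝ) :
    plbo Y L * (Z * Rᵀ + vecMulVec (1 : Fin m → ℝ) t) = plbo Y L * Z * Rᵀ := by
  rw [Matrix.mul_add, mul_vecMulVec, plbo_mulVec_one hgY, zero_vecMulVec, add_zero,
    Matrix.mul_assoc]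

lemma submatrix_rigid {m p : ℕ} (X : Matrix (Fin m) (Fin 3) ℝ) (R : Matrix (Fin 3) (Fin 3) ℝ)
    (t : Fin 3 → ℝ) (f : Fin p → Fin m) :
    (X * Rᵀ + vecMulVec (1 : Fin m → ℝ) t).submatrix f id
      = X.submatrix f id * Rᵀ + vecMulVec (1 : Fin p → ℝ) t :=
  rfl

lemma sub_mul_rigid {p q : ℕ} (Z : Matrix (Fin p) (Fin 3) ℝ) {Q : Matrix (Fin p) (Fin q) ℝ}
    (hQ : Q *ᵥ 1 = 1) (X : Matrix (Fin q) (Fin 3) ℝ) (R : Matrix (Fin 3) (Fin 3) ℝ)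
    (t : Fin 3 → ℝ) :
    (Z * Rᵀ + vecMulVec 1 t) - Q * (X * Rᵀ + vecMulVec 1 t) = (Z - Q * X) * Rᵀ := by
  rw [Matrix.mul_add, mul_vecMulVec, hQ, Matrix.sub_mul, Matrix.mul_assoc]
  abel

lemma objE_rigid {n M N : ℕ} (lamDef lamOri : ℝ) (ι : Fin n → Fin M) (κ : Fin n → Fin N)
    (X : Matrix (Fin M) (Fin 3) ℝ) {Y : Matrix (Fin N) (Fin 3) ℝ}
    (hgY : IsUnit ((homog Y)ᵀ * homog Y)) (LX : Matrix (Fin M) (Fin M) ℝ)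
    (LY : Matrix (Fin N) (Fin N) ℝ) (hX hY : Fin n → ℝ) (dX dY : ℝ)
    {R : Matrix (Fin 3) (Fin 3) ℝ} (hR : Rᵀ * R = 1) (t : Fin 3 → ℝ)
    {P : Matrix (Fin n) (Fin n) ℝ} (hP : Pᵀ *ᵥ 1 = 1)
    (Xh : Matrix (Fin M) (Fin 3) ℝ) (Yh : Matrix (Fin N) (Fin 3) ℝ) :
    objE lamDef lamOri ι κ (X * Rᵀ + vecMulVec 1 t) Y
        (plbo (X * Rᵀ + vecMulVec 1 t) LX) (plbo Y LY) hX hY dX dY P Xh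
        (Yh * Rᵀ + vecMulVec 1 t)
      = objE lamDef lamOri ι κ X Y (plbo X LX) (plbo Y LY) hX hY dX dY P Xh Yh := by
  rw [objE, objE, plbo_rigid X LX hR, submatrix_rigid, submatrix_rigid, sub_mul_rigid _ hP,
    plbo_mul_rigid hgY, frobNorm_mul_transpose_of_transpose_mul_self _ hR,
    frobNorm_mul_transpose_of_transpose_mul_self _ hR]

theorem stmt14_general {n M N : ℕ}
    (X : Matrix (Fin M) (Fin 3) ℝ) (Y : Matrix (Fin N) (Fin 3) ℝ)
    (hgY : IsUnit ((homog Y)ᵀ * homog Y))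
    (ι : Fin n → Fin M) (κ : Fin n → Fin N)
    (LX : Matrix (Fin M) (Fin M) ℝ) (LY : Matrix (Fin N) (Fin N) ℝ)
    (hX hY : Fin n → ℝ) (dX dY : ℝ)
    (lamDef lamOri : ℝ)
    (R : Matrix (Fin 3) (Fin 3) ℝ) (hR : Rᵀ * R = 1)
    (t : Fin 3 → ℝ)
    (P : Matrix (Fin n) (Fin n) ℝ)
    (Xh : Matrix (Fin M) (Fin 3) ℝ) (Yh : Matrix (Fin N) (Fin 3) ℝ)
    (hPfeas : IsPermMat P)
    (hmin : ∀ (P' : Matrix (Fin n) (Fin n) ℝ) (Xh' : Matrix (Fin M) (Fin 3) ℝ)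
        (Yh' : Matrix (Fin N) (Fin 3) ℝ), IsPermMat P' →
        objE lamDef lamOri ι κ X Y (plbo X LX) (plbo Y LY) hX hY dX dY P Xh Yh ≤
          objE lamDef lamOri ι κ X Y (plbo X LX) (plbo Y LY) hX hY dX dY P' Xh' Yh') :
    ∀ (P' : Matrix (Fin n) (Fin n) ℝ) (Xh' : Matrix (Fin M) (Fin 3) ℝ)
      (Yh' : Matrix (Fin N) (Fin 3) ℝ), IsPermMat P' →
      objE lamDef lamOri ι κ (X * Rᵀ + vecMulVec (1 : Fin M → ℝ) t) Y
          (plbo (X * Rᵀ + vecMulVec (1 : Fin M → ℝ) t) LX) (plbo Y LY)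
          hX hY dX dY P Xh (Yh * Rᵀ + vecMulVec (1 : Fin N → ℝ) t) ≤
        objE lamDef lamOri ι κ (X * Rᵀ + vecMulVec (1 : Fin M → ℝ) t) Y
          (plbo (X * Rᵀ + vecMulVec (1 : Fin M → ℝ) t) LX) (plbo Y LY)
          hX hY dX dY P' Xh' Yh' := by
  intro P' Xh' Yh' hP'
  obtain ⟨Yh₀, rfl⟩ : ∃ Yh₀ : Matrix (Fin N) (Fin 3) ℝ, Yh₀ * Rᵀ + vecMulVec 1 t = Yh' :=
    ⟨(Yh' - vecMulVec 1 t) * R, by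
      rw [Matrix.mul_assoc, mul_eq_one_comm.mp hR, Matrix.mul_one, sub_add_cancel]⟩
  rw [objE_rigid _ _ _ _ _ hgY _ _ _ _ _ _ hR _ hPfeas.2.2,
    objE_rigid _ _ _ _ _ hgY _ _ _ _ _ _ hR _ hP'.2.2]
  exact hmin P' Xh' Yh₀ hP'

theorem stmt14 {n M N : ℕ}
    (X : Matrix (Fin M) (Fin 3) ℝ) (Y : Matrix (Fin N) (Fin 3) ℝ)
    (hgX : IsUnit ((homog X)ᵀ * homog X)) (hgY : IsUnit ((homog Y)ᵀ * homog Y))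
    (ι : Fin n → Fin M) (κ : Fin n → Fin N)
    (LX : Matrix (Fin M) (Fin M) ℝ) (LY : Matrix (Fin N) (Fin N) ℝ)
    (hX hY : Fin n → ℝ) (dX dY : ℝ) (hdX : 0 < dX) (hdY : 0 < dY)
    (lamDef lamOri : ℝ) (hld : 0 ≤ lamDef) (hlo : 0 ≤ lamOri)
    (R : Matrix (Fin 3) (Fin 3) ℝ) (hR : Rᵀ * R = 1) (hdet : R.det = 1)
    (t : Fin 3 → ℝ)
    (P : Matrix (Fin n) (Fin n) ℝ)
    (Xh : Matrix (Fin M) (Fin 3) ℝ) (Yh : Matrix (Fin N) (Fin 3) ℝ)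
    (hPfeas : IsPermMat P)
    (hmin : ∀ (P' : Matrix (Fin n) (Fin n) ℝ) (Xh' : Matrix (Fin M) (Fin 3) ℝ)
        (Yh' : Matrix (Fin N) (Fin 3) ℝ), IsPermMat P' →
        objE lamDef lamOri ι κ X Y (plbo X LX) (plbo Y LY) hX hY dX dY P Xh Yh ≤
          objE lamDef lamOri ι κ X Y (plbo X LX) (plbo Y LY) hX hY dX dY P' Xh' Yh') :
    ∀ (P' : Matrix (Fin n) (Fin n) ℝ) (Xh' : Matrix (Fin M) (Fin 3) ℝ)
      (Yh' : Matrix (Fin N) (Fin 3) ℝ), IsPermMat P' →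
      objE lamDef lamOri ι κ (X * Rᵀ + vecMulVec (1 : Fin M → ℝ) t) Y
          (plbo (X * Rᵀ + vecMulVec (1 : Fin M → ℝ) t) LX) (plbo Y LY)
          hX hY dX dY P Xh (Yh * Rᵀ + vecMulVec (1 : Fin N → ℝ) t) ≤
        objE lamDef lamOri ι κ (X * Rᵀ + vecMulVec (1 : Fin M → ℝ) t) Y
          (plbo (X * Rᵀ + vecMulVec (1 : Fin M → ℝ) t) LX) (plbo Y LY)
          hX hY dX dY P' Xh' Yh' :=
  stmt14_general X Y hgY ι κ LX LY hX hY dX dY lamDef lamOri R hR t P Xh Yh hPfeas hmin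
end

section
/- (Lemma 2a, objective-value identity.) Let X ∈ ℝ^{M×3} and Y ∈ ℝ^{N×3} with homogeneous coordinates having invertible Gram matrices, keypoint maps ι, κ, arbitrary stiffness matrices L_X, L_Y with PLBOs Δ_X, Δ_Y, orientation features h_X, h_Y ∈ ℝⁿ, diameters d_X, d_Y > 0 and weights λ_def, λ_ori ≥ 0. Let s > 0 and form the rescaled shape X' := sX with PLBO Δ_X' := Π(X̃')ᵀL_XΠ(X̃') where X̃' := (sX|𝟏), and rescaled diameter s·d_X. Then for every n×n matrix P, every X̂ ∈ ℝ^{M×3} and every Ŷ ∈ ℝ^{N×3}: E(sX, Y, Δ_X', Δ_Y, h_X, h_Y, s·d_X, d_Y; P, X̂, s·Ŷ) = E(X, Y, Δ_X, Δ_Y, h_X, h_Y, d_X, d_Y; P, X̂, Ŷ). -/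
open Matrix

/-!
Rescaling `X` by `s` multiplies its homogeneous coordinates on the right by the invertible
diagonal matrix `diag(s, s, s, 1)`, and `Π(A)` only depends on the column space of `A`, so the
PLBO of `sX` equals that of `X`. The remaining terms that change are those divided by `d_X`;
their numerators are Frobenius norms of matrices scaled by `s`, and the factors `s` cancel.
-/

lemma frobNorm_smul {m n : ℕ} (s : ℝ) (A : Matrix (Fin m) (Fin n) ℝ) :
    frobNorm (s • A) = |s| * frobNorm A := by
  rw [frobNorm, frobNorm, ← Real.sqrt_sq_eq_abs, ← Real.sqrt_mul (sq_nonneg s)]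
  simp only [Matrix.smul_apply, smul_eq_mul, mul_pow, Finset.mul_sum]

lemma gramProj_mul_of_isUnit_det_s15 {m k : Type*} [Fintype m] [DecidableEq m] [Fintype k]
    [DecidableEq k] (A : Matrix m k ℝ) {D : Matrix k k ℝ} (hD : IsUnit D.det) :
    gramProj (A * D) = gramProj A := by
  have hDt : IsUnit Dᵀ.det := by rwa [det_transpose]
  -- `Matrix.mul_inv_rev` needs no invertibility, so `Aᵀ * A` may be singular here
  have hgram : ((A * D)ᵀ * (A * D))⁻¹ = D⁻¹ * (Aᵀ * A)⁻¹ * Dᵀ⁻¹ := by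
    rw [transpose_mul, Matrix.mul_assoc, ← Matrix.mul_assoc Aᵀ, Matrix.mul_inv_rev,
      Matrix.mul_inv_rev, Matrix.mul_assoc]
  rw [gramProj, gramProj, hgram, transpose_mul]
  congr 1
  calc A * D * (D⁻¹ * (Aᵀ * A)⁻¹ * Dᵀ⁻¹) * (Dᵀ * Aᵀ)
      = A * (D * D⁻¹) * (Aᵀ * A)⁻¹ * (Dᵀ⁻¹ * Dᵀ) * Aᵀ := by simp only [Matrix.mul_assoc]
    _ = A * (Aᵀ * A)⁻¹ * Aᵀ := by
      rw [mul_nonsing_inv _ hD, nonsing_inv_mul _ hDt, Matrix.mul_one, Matrix.mul_one]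

lemma homog_smul {m : ℕ} (s : ℝ) (X : Matrix (Fin m) (Fin 3) ℝ) :
    homog (s • X) = homog X * diagonal (Sum.elim (fun _ : Fin 3 => s) fun _ : Fin 1 => 1) := by
  ext i (j | j) <;> simp [homog, mul_comm]

lemma gramProj_homog_smul {m : ℕ} {s : ℝ} (hs : s ≠ 0) (X : Matrix (Fin m) (Fin 3) ℝ) :
    gramProj (homog (s • X)) = gramProj (homog X) := by
  rw [homog_smul]
  refine gramProj_mul_of_isUnit_det_s15 _ ?_
  rw [det_diagonal, Fintype.prod_sum_type]
  simp [hs]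

lemma plbo_smul {m : ℕ} {s : ℝ} (hs : s ≠ 0) (X : Matrix (Fin m) (Fin 3) ℝ)
    (L : Matrix (Fin m) (Fin m) ℝ) : plbo (s • X) L = plbo X L := by
  rw [plbo, plbo, gramProj_homog_smul hs]

lemma one_div_mul_mul_cancel_left {s : ℝ} (hs : s ≠ 0) (c d F : ℝ) :
    1 / (c * (s * d)) * (s * F) = 1 / (c * d) * F := by
  rw [one_div_mul_eq_div, one_div_mul_eq_div, mul_left_comm c, mul_div_mul_left _ _ hs]

theorem stmt15_general {n M N : ℕ}
    (X : Matrix (Fin M) (Fin 3) ℝ) (Y : Matrix (Fin N) (Fin 3) ℝ)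
    (ι : Fin n → Fin M) (κ : Fin n → Fin N)
    (LX : Matrix (Fin M) (Fin M) ℝ) (LY : Matrix (Fin N) (Fin N) ℝ)
    (hX hY : Fin n → ℝ) (dX dY : ℝ)
    (lamDef lamOri : ℝ)
    (s : ℝ) (hs : 0 < s)
    (P : Matrix (Fin n) (Fin n) ℝ)
    (Xh : Matrix (Fin M) (Fin 3) ℝ) (Yh : Matrix (Fin N) (Fin 3) ℝ) :
    objE lamDef lamOri ι κ (s • X) Y (plbo (s • X) LX) (plbo Y LY)
        hX hY (s * dX) dY P Xh (s • Yh) =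
      objE lamDef lamOri ι κ X Y (plbo X LX) (plbo Y LY) hX hY dX dY P Xh Yh := by
  have hYfit : (s • Yh).submatrix κ id - Pᵀ * (s • X).submatrix ι id
      = s • (Yh.submatrix κ id - Pᵀ * X.submatrix ι id) := by
    change s • Yh.submatrix κ id - Pᵀ * (s • X.submatrix ι id) = _
    rw [Matrix.mul_smul, smul_sub]
  rw [objE, objE, plbo_smul hs.ne', hYfit, Matrix.mul_smul, frobNorm_smul, frobNorm_smul,
    abs_of_pos hs, one_div_mul_mul_cancel_left hs.ne', one_div_mul_mul_cancel_left hs.ne']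

theorem stmt15 {n M N : ℕ}
    (X : Matrix (Fin M) (Fin 3) ℝ) (Y : Matrix (Fin N) (Fin 3) ℝ)
    (hgX : IsUnit ((homog X)ᵀ * homog X)) (hgY : IsUnit ((homog Y)ᵀ * homog Y))
    (ι : Fin n → Fin M) (κ : Fin n → Fin N)
    (LX : Matrix (Fin M) (Fin M) ℝ) (LY : Matrix (Fin N) (Fin N) ℝ)
    (hX hY : Fin n → ℝ) (dX dY : ℝ) (hdX : 0 < dX) (hdY : 0 < dY)
    (lamDef lamOri : ℝ) (hld : 0 ≤ lamDef) (hlo : 0 ≤ lamOri)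
    (s : ℝ) (hs : 0 < s)
    (P : Matrix (Fin n) (Fin n) ℝ)
    (Xh : Matrix (Fin M) (Fin 3) ℝ) (Yh : Matrix (Fin N) (Fin 3) ℝ) :
    objE lamDef lamOri ι κ (s • X) Y (plbo (s • X) LX) (plbo Y LY)
        hX hY (s * dX) dY P Xh (s • Yh) =
      objE lamDef lamOri ι κ X Y (plbo X LX) (plbo Y LY) hX hY dX dY P Xh Yh :=
  stmt15_general X Y ι κ LX LY hX hY dX dY lamDef lamOri s hs P Xh Yh
end
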